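/- (Achievability for tests with a rejection option.) For every γ ≥ 0, every exponent triple (E1, E2, E_Ω) with (E1,E2) ∈ R_γ and E_Ω = γ is achievable by fixed-length hypothesis tests with a rejection option; i.e., R_γ × {E_Ω = γ} ⊆ R_Ω^(γ). -/

import Mathlib

/-!
Threshold the log-likelihood ratio `S = ∑ᵢ log (P2 xᵢ / P1 xᵢ)` of the `n` samples: accept `H1`
if `S ≤ n c(λ₂)`, accept `H2` if `S ≥ n c(λ₁)`, and reject otherwise, where `c(λ)` is the mean
of `log (P2 / P1)` under `P^(λ)`. Since `P^(λ)` is the exponential tilt of `P1` by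
`λ log (P2 / P1)` and of `P2` by `(λ - 1) log (P2 / P1)`, Chernoff's bound at the tilted mean
bounds the two errors by `e^{-n D(P^(λ₁)‖P1)}` and `e^{-n D(P^(λ₂)‖P2)}`, and the rejection
probability by `e^{-n D(P^(λ₂)‖P1)} + e^{-n D(P^(λ₁)‖P2)}`. A point of `R_FL` is reached with
`λ₁ = λ₂`, where the thresholds coincide and the test never rejects. For the rectangle pick
`λ₁, λ₂` nearly attaining `E1(γ)` and `E2(γ)`: their constraints `D(P^(λ₁)‖P2) ≥ γ` and
`D(P^(λ₂)‖P1) ≥ γ` make the rejection probability at most `2 e^{-γ n}`.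
-/

open Real Finset
open scoped Classical

noncomputable section

variable {X : Type} [Fintype X]

/-- `p` is a probability mass function on the finite alphabet `X`. -/
def IsPMF (p : X → ℝ) : Prop := (∀ x, 0 ≤ p x) ∧ ∑ x, p x = 1

/-- Kullback–Leibler divergence (natural logarithms) between distributions on a finite
alphabet, with the convention `0 · log(0/·) = 0`. -/
def klDiv (p q : X → ℝ) : ℝ := ∑ x, p x * Real.log (p x / q x)

/-- The `λ`-tilted distribution between `P1` and `P2`. -/
def tilted (P1 P2 : X → ℝ) (lam : ℝ) (x : X) : ℝ :=
  P1 x ^ (1 - lam) * P2 x ^ lam / ∑ a, P1 a ^ (1 - lam) * P2 a ^ lam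

/-- The fixed-length error-exponent region
`R_FL = {(E1,E2) : ∃ λ ∈ [0,1], E1 ≤ D(P^(λ)‖P1) ∧ E2 ≤ D(P^(λ)‖P2)}`. -/
def RFL (P1 P2 : X → ℝ) : Set (ℝ × ℝ) :=
  { E | ∃ lam ∈ Set.Icc (0:ℝ) 1,
      E.1 ≤ klDiv (tilted P1 P2 lam) P1 ∧ E.2 ≤ klDiv (tilted P1 P2 lam) P2 }

/-- `E1(γ) = max { D(P^(λ)‖P1) : λ ∈ [0,1], D(P^(λ)‖P2) ≥ γ }`. -/
def E1exp (P1 P2 : X → ℝ) (γ : ℝ) : ℝ :=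
  sSup { e | ∃ lam ∈ Set.Icc (0:ℝ) 1,
      γ ≤ klDiv (tilted P1 P2 lam) P2 ∧ e = klDiv (tilted P1 P2 lam) P1 }

/-- `E2(γ) = max { D(P^(λ)‖P2) : λ ∈ [0,1], D(P^(λ)‖P1) ≥ γ }`. -/
def E2exp (P1 P2 : X → ℝ) (γ : ℝ) : ℝ :=
  sSup { e | ∃ lam ∈ Set.Icc (0:ℝ) 1,
      γ ≤ klDiv (tilted P1 P2 lam) P1 ∧ e = klDiv (tilted P1 P2 lam) P2 }

/-- `R_γ = R_FL ∪ ([0,E1(γ)] × [0,E2(γ)])`. -/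
def Rgamma (P1 P2 : X → ℝ) (γ : ℝ) : Set (ℝ × ℝ) :=
  RFL P1 P2 ∪ (Set.Icc 0 (E1exp P1 P2 γ) ×ˢ Set.Icc 0 (E2exp P1 P2 γ))

/-- `K·S = {K·x : x ∈ S}` for `S ⊆ ℝ²`. -/
def scaleSet (K : ℕ) (S : Set (ℝ × ℝ)) : Set (ℝ × ℝ) :=
  (fun p : ℝ × ℝ => ((K : ℝ) * p.1, (K : ℝ) * p.2)) '' S

/-- Probability of the i.i.d. sample sequence `x` under the distribution `P`. -/
def prodProb (P : X → ℝ) {N : ℕ} (x : Fin N → X) : ℝ := ∏ i, P (x i)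

/-- The first `n` samples, as a list. -/
def histX {N : ℕ} (x : Fin N → X) (n : ℕ) : List X := (List.ofFn x).take n

/-- A sequential binary hypothesis test whose stopping time is almost surely bounded
by `N`: a stopping time `τ` with respect to the filtration `σ(X_1,…,X_n)` together with
a decision (`accept1 = true` means "choose `H1`") taken at the stopping time; the
decision regions are `A1^τ = {accept1}` and `A2^τ = {¬ accept1}`. -/
structure SeqTest (X : Type) [Fintype X] (N : ℕ) where
  τ : (Fin N → X) → ℕ
  τ_le : ∀ x, τ x ≤ N
  τ_stopping : ∀ x x', histX x' (τ x) = histX x (τ x) → τ x' = τ x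
  accept1 : List X → Bool

/-- Type-I error probability `P1(A2^τ)`. -/
def errProb1 (P1 : X → ℝ) {N : ℕ} (T : SeqTest X N) : ℝ :=
  ∑ x : Fin N → X, prodProb P1 x *
    (if T.accept1 (histX x (T.τ x)) = false then 1 else 0)

/-- Type-II error probability `P2(A1^τ)`. -/
def errProb2 (P2 : X → ℝ) {N : ℕ} (T : SeqTest X N) : ℝ :=
  ∑ x : Fin N → X, prodProb P2 x *
    (if T.accept1 (histX x (T.τ x)) = true then 1 else 0)

/-- Probability `P(τ > n)` under sampling distribution `P`. -/
def lateProbHT (P : X → ℝ) {N : ℕ} (T : SeqTest X N) (n : ℕ) : ℝ :=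
  ∑ x : Fin N → X, prodProb P x * (if n < T.τ x then 1 else 0)

/-- `(E1,E2)` is achievable in a `(γ,K)`-almost-fixed-length manner: for every `δ > 0`
and all large `n` there is a test with `P_i(τ > n) ≤ e^{−γn}`, `τ ≤ Kn` a.s. (encoded in
the type of the test), `P1(A2^τ) ≤ e^{−(E1−δ)n}` and `P2(A1^τ) ≤ e^{−(E2−δ)n}`. -/
def AFLAchievable (P1 P2 : X → ℝ) (γ : ℝ) (K : ℕ) (E : ℝ × ℝ) : Prop :=
  ∀ δ > 0, ∃ N0 : ℕ, ∀ n : ℕ, n ≥ N0 → ∃ T : SeqTest X (K * n),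
    lateProbHT P1 T n ≤ Real.exp (-(γ * n)) ∧
    lateProbHT P2 T n ≤ Real.exp (-(γ * n)) ∧
    errProb1 P1 T ≤ Real.exp (-((E.1 - δ) * n)) ∧
    errProb2 P2 T ≤ Real.exp (-((E.2 - δ) * n))

/-- `R_AFL^(γ,K)`: the region of error-exponent pairs achievable in a
`(γ,K)`-almost-fixed-length manner. -/
def RAFL (P1 P2 : X → ℝ) (γ : ℝ) (K : ℕ) : Set (ℝ × ℝ) :=
  { E | AFLAchievable P1 P2 γ K E }

/-- A fixed-length hypothesis test with a rejection option and stopping time `τ ≤ n`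
almost surely: the decision (`0 ↦` accept `H1`, `1 ↦` accept `H2`, `2 ↦` reject both)
is taken at the stopping time. -/
structure RejTest (X : Type) [Fintype X] (n : ℕ) where
  τ : (Fin n → X) → ℕ
  τ_le : ∀ x, τ x ≤ n
  τ_stopping : ∀ x x', histX x' (τ x) = histX x (τ x) → τ x' = τ x
  dec : List X → Fin 3

/-- `P1(A2^τ)`. -/
def rejErr1 (P1 : X → ℝ) {n : ℕ} (T : RejTest X n) : ℝ :=
  ∑ x : Fin n → X, prodProb P1 x * (if T.dec (histX x (T.τ x)) = 1 then 1 else 0)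

/-- `P2(A1^τ)`. -/
def rejErr2 (P2 : X → ℝ) {n : ℕ} (T : RejTest X n) : ℝ :=
  ∑ x : Fin n → X, prodProb P2 x * (if T.dec (histX x (T.τ x)) = 0 then 1 else 0)

/-- `P1(A_Ω^τ) + P2(A_Ω^τ)`. -/
def rejProb (P1 P2 : X → ℝ) {n : ℕ} (T : RejTest X n) : ℝ :=
  (∑ x : Fin n → X, prodProb P1 x * (if T.dec (histX x (T.τ x)) = 2 then 1 else 0)) +
  (∑ x : Fin n → X, prodProb P2 x * (if T.dec (histX x (T.τ x)) = 2 then 1 else 0))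

/-- The exponent triple `(E1, E2, EΩ)` is achievable by fixed-length hypothesis tests
with a rejection option. -/
def RejAchievable (P1 P2 : X → ℝ) (E1 E2 EΩ : ℝ) : Prop :=
  ∀ δ > 0, ∃ N0 : ℕ, ∀ n : ℕ, n ≥ N0 → ∃ T : RejTest X n,
    rejErr1 P1 T ≤ Real.exp (-((E1 - δ) * n)) ∧
    rejErr2 P2 T ≤ Real.exp (-((E2 - δ) * n)) ∧
    rejProb P1 P2 T ≤ Real.exp (-((EΩ - δ) * n))

/-- `R_Ω^(γ)`: the region of `(E1,E2)` such that `(E1,E2,γ)` is achievable by tests with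
a rejection option. -/
def ROmega (P1 P2 : X → ℝ) (γ : ℝ) : Set (ℝ × ℝ) :=
  { E | RejAchievable P1 P2 E.1 E.2 γ }


theorem klDiv_nonneg {p q : X → ℝ} (hp : ∀ x, 0 ≤ p x) (hq : ∀ x, 0 < q x)
    (hpq : ∑ x, p x = ∑ x, q x) : 0 ≤ klDiv p q := by
  have key : ∀ x, p x - q x ≤ p x * Real.log (p x / q x) := by
    intro x
    rcases (hp x).eq_or_lt with h | h
    · simp [← h, (hq x).le]
    · have hlog := Real.one_sub_inv_le_log_of_pos (div_pos h (hq x))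
      rw [inv_div] at hlog
      calc p x - q x = p x * (1 - q x / p x) := by field_simp
        _ ≤ p x * Real.log (p x / q x) := mul_le_mul_of_nonneg_left hlog h.le
  calc (0 : ℝ) = ∑ x, (p x - q x) := by rw [Finset.sum_sub_distrib, hpq, sub_self]
    _ ≤ klDiv p q := Finset.sum_le_sum fun x _ => key x

theorem sum_prodProb_ite_le_exp_mul_pow {P : X → ℝ} (hP : ∀ a, 0 ≤ P a) (g : X → ℝ) (t : ℝ)
    {n : ℕ} (E : (Fin n → X) → Prop) [DecidablePred E] (hE : ∀ x, E x → t ≤ ∑ i, g (x i)) :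
    ∑ x : Fin n → X, prodProb P x * (if E x then 1 else 0)
      ≤ Real.exp (-t) * (∑ a, P a * Real.exp (g a)) ^ n := by
  rw [Fintype.sum_pow, Finset.mul_sum]
  refine Finset.sum_le_sum fun x _ => ?_
  have hx : Real.exp (-t) * ∏ i, (P (x i) * Real.exp (g (x i)))
      = prodProb P x * Real.exp (∑ i, g (x i) - t) := by
    rw [Finset.prod_mul_distrib, ← Real.exp_sum, sub_eq_add_neg, Real.exp_add, prodProb]
    ring
  have hP0 : 0 ≤ prodProb P x := Finset.prod_nonneg fun i _ => hP _
  rw [hx]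
  split_ifs with h
  · rw [mul_one]
    exact le_mul_of_one_le_right hP0 (Real.one_le_exp (sub_nonneg.2 (hE x h)))
  · rw [mul_zero]
    positivity

section ExponentialFamily

variable [Nonempty X] {p q g : X → ℝ} {θ : ℝ}

theorem sum_mul_exp_pos (hq : ∀ a, 0 < q a) (f : X → ℝ) : 0 < ∑ a, q a * Real.exp (f a) :=
  Finset.sum_pos (fun a _ => mul_pos (hq a) (Real.exp_pos _)) Finset.univ_nonempty

theorem sum_eq_one_of_eq_mul_exp (hq : ∀ a, 0 < q a)
    (hp : ∀ a, p a = q a * Real.exp (θ * g a) / ∑ b, q b * Real.exp (θ * g b)) :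
    ∑ a, p a = 1 := by
  simp only [hp, ← Finset.sum_div]
  exact div_self (sum_mul_exp_pos hq _).ne'

theorem klDiv_eq_of_eq_mul_exp (hq : ∀ a, 0 < q a)
    (hp : ∀ a, p a = q a * Real.exp (θ * g a) / ∑ b, q b * Real.exp (θ * g b)) :
    klDiv p q = θ * ∑ a, p a * g a - Real.log (∑ b, q b * Real.exp (θ * g b)) := by
  set Z := ∑ b, q b * Real.exp (θ * g b)
  have hZ : 0 < Z := sum_mul_exp_pos hq _
  have hsum : ∑ a, p a = 1 := sum_eq_one_of_eq_mul_exp hq hp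
  have hlog : ∀ a, Real.log (p a / q a) = θ * g a - Real.log Z := by
    intro a
    have hpq : p a / q a = Real.exp (θ * g a) / Z := by
      rw [hp]
      field_simp [(hq a).ne']
    rw [hpq, Real.log_div (Real.exp_pos _).ne' hZ.ne', Real.log_exp]
  simp only [klDiv, hlog, mul_sub, Finset.sum_sub_distrib, ← Finset.sum_mul, hsum, one_mul,
    Finset.mul_sum, mul_left_comm θ]

/-- Chernoff's bound at the mean of the tilted law `p`; the factor `θ` in `hE` makes it cover
the upper tail `∑ g(xᵢ) ≥ n 𝔼_p g` for `θ ≥ 0` and the lower tail for `θ ≤ 0`. -/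
theorem sum_prodProb_ite_le_exp_neg_klDiv (hq : ∀ a, 0 < q a)
    (hp : ∀ a, p a = q a * Real.exp (θ * g a) / ∑ b, q b * Real.exp (θ * g b)) {n : ℕ}
    (E : (Fin n → X) → Prop) [DecidablePred E]
    (hE : ∀ x, E x → θ * (n * ∑ a, p a * g a) ≤ θ * ∑ i, g (x i)) :
    ∑ x : Fin n → X, prodProb q x * (if E x then 1 else 0) ≤ Real.exp (-(n * klDiv p q)) := by
  have hZ : 0 < ∑ b, q b * Real.exp (θ * g b) := sum_mul_exp_pos hq _
  have hpow : (∑ b, q b * Real.exp (θ * g b)) ^ n =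
      Real.exp (n * Real.log (∑ b, q b * Real.exp (θ * g b))) := by
    rw [Real.exp_nat_mul, Real.exp_log hZ]
  calc _ ≤ Real.exp (-(θ * (n * ∑ a, p a * g a))) * (∑ b, q b * Real.exp (θ * g b)) ^ n :=
        sum_prodProb_ite_le_exp_mul_pow (fun a => (hq a).le) (fun a => θ * g a) _ E
          fun x hx => by simpa only [Finset.mul_sum] using hE x hx
    _ = Real.exp (-(n * klDiv p q)) := by
        rw [klDiv_eq_of_eq_mul_exp hq hp, hpow, ← Real.exp_add]
        ring_nf

end ExponentialFamily

theorem rpow_one_sub_mul_rpow_eq_mul_exp {p q : ℝ} (hp : 0 < p) (hq : 0 < q) (lam : ℝ) :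
    p ^ (1 - lam) * q ^ lam = p * Real.exp (lam * Real.log (q / p)) := by
  calc p ^ (1 - lam) * q ^ lam
        = Real.exp (Real.log p) * Real.exp (lam * (Real.log q - Real.log p)) := by
        rw [Real.rpow_def_of_pos hp, Real.rpow_def_of_pos hq, ← Real.exp_add, ← Real.exp_add]
        ring_nf
    _ = p * Real.exp (lam * Real.log (q / p)) := by
        rw [Real.exp_log hp, Real.log_div hq.ne' hp.ne']

theorem rpow_one_sub_mul_rpow_eq_mul_exp_right {p q : ℝ} (hp : 0 < p) (hq : 0 < q) (lam : ℝ) :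
    p ^ (1 - lam) * q ^ lam = q * Real.exp ((lam - 1) * Real.log (q / p)) := by
  have h := rpow_one_sub_mul_rpow_eq_mul_exp hq hp (1 - lam)
  rw [sub_sub_cancel] at h
  rw [mul_comm, h, Real.log_div hp.ne' hq.ne', Real.log_div hq.ne' hp.ne']
  ring_nf

def llr (P1 P2 : X → ℝ) (a : X) : ℝ := Real.log (P2 a / P1 a)

def tiltedMean (P1 P2 : X → ℝ) (lam : ℝ) : ℝ := ∑ a, tilted P1 P2 lam a * llr P1 P2 a

section LikelihoodRatio

variable {P1 P2 : X → ℝ}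

theorem tilted_eq_mul_exp_left (hs1 : ∀ x, 0 < P1 x) (hs2 : ∀ x, 0 < P2 x) (lam : ℝ)
    (a : X) :
    tilted P1 P2 lam a
      = P1 a * Real.exp (lam * llr P1 P2 a) / ∑ b, P1 b * Real.exp (lam * llr P1 P2 b) := by
  simp only [tilted, llr, rpow_one_sub_mul_rpow_eq_mul_exp (hs1 _) (hs2 _)]

theorem tilted_eq_mul_exp_right (hs1 : ∀ x, 0 < P1 x) (hs2 : ∀ x, 0 < P2 x) (lam : ℝ)
    (a : X) :
    tilted P1 P2 lam a = P2 a * Real.exp ((lam - 1) * llr P1 P2 a)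
      / ∑ b, P2 b * Real.exp ((lam - 1) * llr P1 P2 b) := by
  simp only [tilted, llr, rpow_one_sub_mul_rpow_eq_mul_exp_right (hs1 _) (hs2 _)]

theorem klDiv_tilted_nonneg [Nonempty X] (hs1 : ∀ x, 0 < P1 x) (hs2 : ∀ x, 0 < P2 x) (lam : ℝ)
    {P : X → ℝ} (hP : ∀ x, 0 < P x) (hP1 : ∑ x, P x = 1) :
    0 ≤ klDiv (tilted P1 P2 lam) P := by
  have h := tilted_eq_mul_exp_left hs1 hs2 lam
  refine klDiv_nonneg (fun x => ?_) hP ?_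
  · rw [h]
    exact div_nonneg (mul_pos (hs1 x) (Real.exp_pos _)).le (sum_mul_exp_pos hs1 _).le
  · rw [hP1, sum_eq_one_of_eq_mul_exp hs1 h]

def thresholdDecision (A B s : ℝ) : Fin 3 := if s ≤ B then 0 else if A ≤ s then 1 else 2

theorem le_of_thresholdDecision_eq_one {A B s : ℝ} (h : thresholdDecision A B s = 1) :
    A ≤ s := by
  unfold thresholdDecision at h
  split_ifs at h <;> first | assumption | exact absurd h (by decide)

theorem le_of_thresholdDecision_eq_zero {A B s : ℝ} (h : thresholdDecision A B s = 0) :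
    s ≤ B := by
  unfold thresholdDecision at h
  split_ifs at h <;> first | assumption | exact absurd h (by decide)

theorem thresholdDecision_eq_two_iff {A B s : ℝ} :
    thresholdDecision A B s = 2 ↔ B < s ∧ s < A := by
  unfold thresholdDecision
  split_ifs with h1 h2
  · simp only [Fin.reduceEq, false_iff, not_and, not_lt]; intro h; linarith
  · simp only [Fin.reduceEq, false_iff, not_and, not_lt]; intro; exact h2
  · simp only [true_iff]; exact ⟨not_le.1 h1, not_le.1 h2⟩

def llrTest (P1 P2 : X → ℝ) (n : ℕ) (A B : ℝ) : RejTest X n where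
  τ _ := n
  τ_le _ := le_rfl
  τ_stopping _ _ _ := rfl
  dec l := thresholdDecision A B (l.map (llr P1 P2)).sum

theorem llrTest_dec (n : ℕ) (A B : ℝ) (x : Fin n → X) :
    (llrTest P1 P2 n A B).dec (histX x ((llrTest P1 P2 n A B).τ x))
      = thresholdDecision A B (∑ i, llr P1 P2 (x i)) := by
  simp only [llrTest, histX, List.take_of_length_le (List.length_ofFn (f := x)).le,
    List.map_ofFn, List.sum_ofFn, Function.comp_apply]

theorem rejProb_llrTest_eq_zero {n : ℕ} {A B : ℝ} (hAB : A ≤ B) :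
    rejProb P1 P2 (llrTest P1 P2 n A B) = 0 := by
  have h : ∀ s, thresholdDecision A B s ≠ 2 := fun s hs => by
    have := thresholdDecision_eq_two_iff.1 hs
    linarith [this.1, this.2]
  simp [rejProb, llrTest_dec, h]

variable [Nonempty X]

theorem rejErr1_llrTest_le (hs1 : ∀ x, 0 < P1 x) (hs2 : ∀ x, 0 < P2 x) {n : ℕ} {lam : ℝ}
    (hlam : 0 ≤ lam) (B : ℝ) :
    rejErr1 P1 (llrTest P1 P2 n (n * tiltedMean P1 P2 lam) B)
      ≤ Real.exp (-(n * klDiv (tilted P1 P2 lam) P1)) := by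
  simp only [rejErr1, llrTest_dec]
  exact sum_prodProb_ite_le_exp_neg_klDiv hs1 (tilted_eq_mul_exp_left hs1 hs2 lam) _
    fun x hx => mul_le_mul_of_nonneg_left (le_of_thresholdDecision_eq_one hx) hlam

theorem rejErr2_llrTest_le (hs1 : ∀ x, 0 < P1 x) (hs2 : ∀ x, 0 < P2 x) {n : ℕ} {lam : ℝ}
    (hlam : lam ≤ 1) (A : ℝ) :
    rejErr2 P2 (llrTest P1 P2 n A (n * tiltedMean P1 P2 lam))
      ≤ Real.exp (-(n * klDiv (tilted P1 P2 lam) P2)) := by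
  simp only [rejErr2, llrTest_dec]
  exact sum_prodProb_ite_le_exp_neg_klDiv hs2 (tilted_eq_mul_exp_right hs1 hs2 lam) _
    fun x hx => mul_le_mul_of_nonpos_left (le_of_thresholdDecision_eq_zero hx) (by linarith)

theorem rejProb_llrTest_le (hs1 : ∀ x, 0 < P1 x) (hs2 : ∀ x, 0 < P2 x) {n : ℕ} {lam1 lam2 : ℝ}
    (hlam1 : lam1 ≤ 1) (hlam2 : 0 ≤ lam2) :
    rejProb P1 P2 (llrTest P1 P2 n (n * tiltedMean P1 P2 lam1) (n * tiltedMean P1 P2 lam2))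
      ≤ Real.exp (-(n * klDiv (tilted P1 P2 lam2) P1))
        + Real.exp (-(n * klDiv (tilted P1 P2 lam1) P2)) := by
  simp only [rejProb, llrTest_dec]
  refine add_le_add ?_ ?_
  · exact sum_prodProb_ite_le_exp_neg_klDiv hs1 (tilted_eq_mul_exp_left hs1 hs2 lam2) _
      fun x hx => mul_le_mul_of_nonneg_left (thresholdDecision_eq_two_iff.1 hx).1.le hlam2
  · exact sum_prodProb_ite_le_exp_neg_klDiv hs2 (tilted_eq_mul_exp_right hs1 hs2 lam1) _
      fun x hx => mul_le_mul_of_nonpos_left (thresholdDecision_eq_two_iff.1 hx).2.le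
        (by linarith)

end LikelihoodRatio

theorem exp_neg_mul_le_exp_neg_mul {a b n : ℝ} (hn : 0 ≤ n) (hab : a ≤ b) :
    Real.exp (-(n * b)) ≤ Real.exp (-(a * n)) :=
  Real.exp_le_exp.2 (by nlinarith)

theorem rejAchievable_of_forall_exists_tilted [Nonempty X] {P1 P2 : X → ℝ}
    (hs1 : ∀ x, 0 < P1 x) (hs2 : ∀ x, 0 < P2 x) {E1 E2 γ : ℝ}
    (h : ∀ δ > 0, ∃ lam1 ∈ Set.Icc (0 : ℝ) 1, ∃ lam2 ∈ Set.Icc (0 : ℝ) 1,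
      E1 - δ ≤ klDiv (tilted P1 P2 lam1) P1 ∧ E2 - δ ≤ klDiv (tilted P1 P2 lam2) P2 ∧
      (lam1 = lam2 ∨ γ ≤ klDiv (tilted P1 P2 lam1) P2 ∧ γ ≤ klDiv (tilted P1 P2 lam2) P1)) :
    RejAchievable P1 P2 E1 E2 γ := by
  intro δ hδ
  obtain ⟨lam1, hlam1, lam2, hlam2, hE1, hE2, hrej⟩ := h δ hδ
  refine ⟨⌈Real.log 2 / δ⌉₊, fun n hn => ⟨llrTest P1 P2 n (n * tiltedMean P1 P2 lam1)
    (n * tiltedMean P1 P2 lam2), ?_, ?_, ?_⟩⟩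
  · exact (rejErr1_llrTest_le hs1 hs2 hlam1.1 _).trans
      (exp_neg_mul_le_exp_neg_mul n.cast_nonneg hE1)
  · exact (rejErr2_llrTest_le hs1 hs2 hlam2.2 _).trans
      (exp_neg_mul_le_exp_neg_mul n.cast_nonneg hE2)
  rcases hrej with rfl | ⟨hγ1, hγ2⟩
  · rw [rejProb_llrTest_eq_zero le_rfl]
    exact (Real.exp_pos _).le
  have hlog2 : Real.log 2 ≤ δ * n :=
    (div_le_iff₀' hδ).1 ((Nat.le_ceil _).trans (Nat.cast_le.2 hn))
  calc _ ≤ Real.exp (-(n * klDiv (tilted P1 P2 lam2) P1))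
        + Real.exp (-(n * klDiv (tilted P1 P2 lam1) P2)) :=
        rejProb_llrTest_le hs1 hs2 hlam1.2 hlam2.1
    _ ≤ Real.exp (-(γ * n)) + Real.exp (-(γ * n)) :=
        add_le_add (exp_neg_mul_le_exp_neg_mul n.cast_nonneg hγ2)
          (exp_neg_mul_le_exp_neg_mul n.cast_nonneg hγ1)
    _ = Real.exp (Real.log 2 + -(γ * n)) := by
        rw [Real.exp_add, Real.exp_log two_pos]
        ring
    _ ≤ Real.exp (-((γ - δ) * n)) := Real.exp_le_exp.2 (by linarith)

/-- Since `sSup ∅ = 0` in `ℝ`, an empty constraint set in `E1exp` or `E2exp` leaves only the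
degenerate side `E = 0` of the rectangle. -/
theorem eq_zero_or_exists_sub_lt_of_le_sSup {ι : Type*} {s : Set ι} {p : ι → Prop}
    {f : ι → ℝ} {E δ : ℝ} (hE0 : 0 ≤ E) (hE : E ≤ sSup {e | ∃ i ∈ s, p i ∧ e = f i})
    (hδ : 0 < δ) : E = 0 ∨ ∃ i ∈ s, p i ∧ E - δ < f i := by
  rcases Set.eq_empty_or_nonempty {e | ∃ i ∈ s, p i ∧ e = f i} with hempty | hne
  · rw [hempty, Real.sSup_empty] at hE
    exact Or.inl (le_antisymm hE hE0)
  · obtain ⟨_, ⟨i, hi, hpi, rfl⟩, hlt⟩ := exists_lt_of_lt_csSup hne (by linarith : E - δ < _)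
    exact Or.inr ⟨i, hi, hpi, hlt⟩

theorem rejection_achievability_general
    {X : Type} [Fintype X]
    (P1 P2 : X → ℝ) (h1 : IsPMF P1) (h2 : IsPMF P2)
    (hs1 : ∀ x, 0 < P1 x) (hs2 : ∀ x, 0 < P2 x)
    (γ : ℝ) :
    Rgamma P1 P2 γ ⊆ ROmega P1 P2 γ := by
  obtain ⟨a, -, -⟩ := Finset.exists_ne_zero_of_sum_ne_zero (h1.2 ▸ one_ne_zero)
  have : Nonempty X := ⟨a⟩
  have hD1 lam := klDiv_tilted_nonneg hs1 hs2 lam hs1 h1.2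
  have hD2 lam := klDiv_tilted_nonneg hs1 hs2 lam hs2 h2.2
  rintro ⟨E1, E2⟩ hE
  refine rejAchievable_of_forall_exists_tilted hs1 hs2 fun δ hδ => ?_
  rcases hE with ⟨lam, hlam, hE1, hE2⟩ | ⟨⟨hE1, hE1'⟩, hE2, hE2'⟩
  · exact ⟨lam, hlam, lam, hlam, by linarith, by linarith, Or.inl rfl⟩
  rcases eq_zero_or_exists_sub_lt_of_le_sSup hE1 hE1' hδ with rfl | ⟨lam1, hlam1, hγ1, hlt1⟩ <;>
    rcases eq_zero_or_exists_sub_lt_of_le_sSup hE2 hE2' hδ with rfl | ⟨lam2, hlam2, hγ2, hlt2⟩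
  · exact ⟨0, ⟨le_rfl, zero_le_one⟩, 0, ⟨le_rfl, zero_le_one⟩, by linarith [hD1 0],
      by linarith [hD2 0], Or.inl rfl⟩
  · exact ⟨lam2, hlam2, lam2, hlam2, by linarith [hD1 lam2], hlt2.le, Or.inl rfl⟩
  · exact ⟨lam1, hlam1, lam1, hlam1, hlt1.le, by linarith [hD2 lam1], Or.inl rfl⟩
  · exact ⟨lam1, hlam1, lam2, hlam2, hlt1.le, hlt2.le, Or.inr ⟨hγ1, hγ2⟩⟩

/-- **Achievability with rejection.** For every `γ ≥ 0`, every triple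
`(E1,E2,E_Ω)` with `(E1,E2) ∈ R_γ` and `E_Ω = γ` is achievable by fixed-length tests
with a rejection option: `R_γ × {E_Ω = γ} ⊆ R_Ω^(γ)`. -/
theorem rejection_achievability
    {X : Type} [Fintype X]
    (P1 P2 : X → ℝ) (h1 : IsPMF P1) (h2 : IsPMF P2) (hne : P1 ≠ P2)
    (hs1 : ∀ x, 0 < P1 x) (hs2 : ∀ x, 0 < P2 x)
    (γ : ℝ) (hγ : 0 ≤ γ) :
    Rgamma P1 P2 γ ⊆ ROmega P1 P2 γ :=
  rejection_achievability_general P1 P2 h1 h2 hs1 hs2 γ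

end
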